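/- arXiv:2108.13467 — 4 statements merged into one kernel-verified Lean document; each statement's English description precedes it below -/
import Mathlib

section
/- Let (V, ω) be a symplectic vector space over ℝ and L₁, L₂, L₃ Lagrangian subspaces. For x₁, x₁' ∈ L₁ ∩ (L₂ + L₃), define Ψ(x₁, x₁') = ω(x₁, x₂'), where x₂' ∈ L₂ and x₃' ∈ L₃ are any vectors with x₁' + x₂' + x₃' = 0. Then Ψ(x₁, x₁') is independent of the choice of x₂' and x₃'. -/
/-!
Two choices of `x₂'` differ by `x₂' - y₂' = y₃' - x₃' ∈ L₂ ∩ L₃`, and since `L₂` and `L₃`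
are isotropic, `L₂ ∩ L₃` is `ω`-orthogonal to all of `L₂ + L₃ ∋ x₁`.
-/

/-- A subspace `L` of a symplectic vector space `(V, ω)` is Lagrangian if it equals
its own `ω`-orthogonal complement. -/
def IsLagrangian {V : Type*} [AddCommGroup V] [Module ℝ V]
    (ω : LinearMap.BilinForm ℝ V) (L : Submodule ℝ V) : Prop :=
  ω.orthogonal L = L

namespace Submodule

variable {R M : Type*} [Ring R] [AddCommGroup M] [Module R M]

theorem sub_mem_inf_of_add_add_eq_zero {L N : Submodule R M} {a b b' c c' : M}
    (hb : b ∈ L) (hb' : b' ∈ L) (hc : c ∈ N) (hc' : c' ∈ N)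
    (h : a + b + c = 0) (h' : a + b' + c' = 0) : b - b' ∈ L ⊓ N := by
  have hdiff : b - b' = c' - c := by
    rw [← sub_eq_zero, show b - b' - (c' - c) = (a + b + c) - (a + b' + c') by abel, h, h',
      sub_zero]
  exact ⟨sub_mem hb hb', hdiff ▸ sub_mem hc' hc⟩

end Submodule

namespace LinearMap.BilinForm

variable {R M : Type*} [CommRing R] [AddCommGroup M] [Module R M] {B : LinearMap.BilinForm R M}

theorem inf_le_orthogonal_sup {L N : Submodule R M}
    (hL : L ≤ B.orthogonal L) (hN : N ≤ B.orthogonal N) : L ⊓ N ≤ B.orthogonal (L ⊔ N) := by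
  rintro z ⟨hzL, hzN⟩ x hx
  obtain ⟨a, ha, c, hc, rfl⟩ := Submodule.mem_sup.mp hx
  rw [map_add, LinearMap.add_apply, hL hzL a ha, hN hzN c hc, add_zero]

end LinearMap.BilinForm

theorem wall_form_well_defined_general
    {V : Type*} [AddCommGroup V] [Module ℝ V]
    (ω : LinearMap.BilinForm ℝ V)
    (L₁ L₂ L₃ : Submodule ℝ V)
    (h₂ : IsLagrangian ω L₂) (h₃ : IsLagrangian ω L₃)
    (x₁ : V) (hx₁ : x₁ ∈ L₁ ⊓ (L₂ ⊔ L₃))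
    (x₁' : V)
    (x₂' y₂' : V) (hx₂' : x₂' ∈ L₂) (hy₂' : y₂' ∈ L₂)
    (x₃' y₃' : V) (hx₃' : x₃' ∈ L₃) (hy₃' : y₃' ∈ L₃)
    (hsum : x₁' + x₂' + x₃' = 0) (hsum' : x₁' + y₂' + y₃' = 0) :
    ω x₁ x₂' = ω x₁ y₂' := by
  have hdiff : x₂' - y₂' ∈ L₂ ⊓ L₃ :=
    Submodule.sub_mem_inf_of_add_add_eq_zero hx₂' hy₂' hx₃' hy₃' hsum hsum'
  have horth : ω x₁ (x₂' - y₂') = 0 :=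
    LinearMap.BilinForm.inf_le_orthogonal_sup h₂.ge h₃.ge hdiff x₁ hx₁.2
  rwa [map_sub, sub_eq_zero] at horth

/-- **The Wall form is well defined.**
Let `(V, ω)` be a symplectic vector space over `ℝ` and `L₁, L₂, L₃` Lagrangian
subspaces.  For `x₁, x₁' ∈ L₁ ∩ (L₂ + L₃)` set `Ψ(x₁, x₁') = ω(x₁, x₂')` where
`x₂' ∈ L₂`, `x₃' ∈ L₃` are any vectors with `x₁' + x₂' + x₃' = 0`.  Then the value
`ω(x₁, x₂')` is independent of the choice of `x₂'` and `x₃'`. -/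
theorem wall_form_well_defined
    {V : Type*} [AddCommGroup V] [Module ℝ V] [FiniteDimensional ℝ V]
    (ω : LinearMap.BilinForm ℝ V) (halt : ω.IsAlt) (hnd : ω.Nondegenerate)
    (L₁ L₂ L₃ : Submodule ℝ V)
    (h₁ : IsLagrangian ω L₁) (h₂ : IsLagrangian ω L₂) (h₃ : IsLagrangian ω L₃)
    (x₁ : V) (hx₁ : x₁ ∈ L₁ ⊓ (L₂ ⊔ L₃))
    (x₁' : V) (hx₁' : x₁' ∈ L₁ ⊓ (L₂ ⊔ L₃))
    (x₂' y₂' : V) (hx₂' : x₂' ∈ L₂) (hy₂' : y₂' ∈ L₂)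
    (x₃' y₃' : V) (hx₃' : x₃' ∈ L₃) (hy₃' : y₃' ∈ L₃)
    (hsum : x₁' + x₂' + x₃' = 0) (hsum' : x₁' + y₂' + y₃' = 0) :
    ω x₁ x₂' = ω x₁ y₂' :=
  wall_form_well_defined_general ω L₁ L₂ L₃ h₂ h₃ x₁ hx₁ x₁' x₂' y₂' hx₂' hy₂' x₃' y₃' hx₃' hy₃'
    hsum hsum'
end

section
/- Let (V, ω) be a symplectic vector space over ℝ and L₁, L₂, L₃ Lagrangian subspaces. The bilinear form Ψ on L₁ ∩ (L₂ + L₃) defined by Ψ(x₁, x₁') = ω(x₁, x₂') (where x₁' + x₂' + x₃' = 0 with x₂' ∈ L₂, x₃' ∈ L₃) is symmetric: Ψ(x₁, x₁') = Ψ(x₁', x₁) for all x₁, x₁' ∈ L₁ ∩ (L₂ + L₃). -/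
theorem IsLagrangian.apply_eq_zero {V : Type*} [AddCommGroup V] [Module ℝ V]
    {ω : LinearMap.BilinForm ℝ V} {L : Submodule ℝ V} (hL : IsLagrangian ω L)
    {a b : V} (ha : a ∈ L) (hb : b ∈ L) : ω a b = 0 :=
  LinearMap.BilinForm.mem_orthogonal_iff.mp (hL.symm ▸ hb) a ha

namespace LinearMap.BilinForm

variable {R M : Type*} [CommRing R] [AddCommGroup M] [Module R M] {B : LinearMap.BilinForm R M}

/-- Pairing each relation `x₁ + x₂ + x₃ = 0`, `y₁ + y₂ + y₃ = 0` against one term of the other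
and cancelling the diagonal pairings `B xᵢ yᵢ` gives
`B x₁ y₂ = -B x₁ y₃ = B x₂ y₃ = -B x₂ y₁ = B y₁ x₂`. -/
theorem IsAlt.apply_eq_apply_of_add_add_eq_zero (hB : B.IsAlt) {x₁ x₂ x₃ y₁ y₂ y₃ : M}
    (hx : x₁ + x₂ + x₃ = 0) (hy : y₁ + y₂ + y₃ = 0)
    (h₁ : B x₁ y₁ = 0) (h₂ : B x₂ y₂ = 0) (h₃ : B x₃ y₃ = 0) :
    B x₁ y₂ = B y₁ x₂ := by
  have hx₁y : B x₁ (y₁ + y₂ + y₃) = 0 := by rw [hy, map_zero]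
  have hxy₃ : B (x₁ + x₂ + x₃) y₃ = 0 := by rw [hx, map_zero, LinearMap.zero_apply]
  have hx₂y : B x₂ (y₁ + y₂ + y₃) = 0 := by rw [hy, map_zero]
  have hskew : B x₂ y₁ = -B y₁ x₂ := (hB.neg_eq y₁ x₂).symm
  simp only [map_add, LinearMap.add_apply] at hx₁y hxy₃ hx₂y
  linear_combination hx₁y - hxy₃ + hx₂y - h₁ + h₃ - h₂ - hskew

end LinearMap.BilinForm

theorem wall_form_symmetric_general
    {V : Type*} [AddCommGroup V] [Module ℝ V]
    (ω : LinearMap.BilinForm ℝ V) (halt : ω.IsAlt)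
    (L₁ L₂ L₃ : Submodule ℝ V)
    (h₁ : IsLagrangian ω L₁) (h₂ : IsLagrangian ω L₂) (h₃ : IsLagrangian ω L₃)
    (x₁ : V) (hx₁ : x₁ ∈ L₁ ⊓ (L₂ ⊔ L₃))
    (x₁' : V) (hx₁' : x₁' ∈ L₁ ⊓ (L₂ ⊔ L₃))
    (x₂ x₂' : V) (hx₂ : x₂ ∈ L₂) (hx₂' : x₂' ∈ L₂)
    (x₃ x₃' : V) (hx₃ : x₃ ∈ L₃) (hx₃' : x₃' ∈ L₃)
    (hsum : x₁ + x₂ + x₃ = 0) (hsum' : x₁' + x₂' + x₃' = 0) :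
    ω x₁ x₂' = ω x₁' x₂ :=
  halt.apply_eq_apply_of_add_add_eq_zero hsum hsum' (h₁.apply_eq_zero hx₁.1 hx₁'.1)
    (h₂.apply_eq_zero hx₂ hx₂') (h₃.apply_eq_zero hx₃ hx₃')

/-- **The Wall form is symmetric.**
Let `(V, ω)` be a symplectic vector space over `ℝ` and `L₁, L₂, L₃` Lagrangian
subspaces.  The Wall form on `L₁ ∩ (L₂ + L₃)` is defined by `Ψ(x₁, x₁') = ω(x₁, x₂')`
where `x₁' + x₂' + x₃' = 0` with `x₂' ∈ L₂`, `x₃' ∈ L₃`.  It is symmetric: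
`Ψ(x₁, x₁') = Ψ(x₁', x₁)`, i.e. `ω(x₁, x₂') = ω(x₁', x₂)` for decompositions
`x₁ + x₂ + x₃ = 0` and `x₁' + x₂' + x₃' = 0`. -/
theorem wall_form_symmetric
    {V : Type*} [AddCommGroup V] [Module ℝ V] [FiniteDimensional ℝ V]
    (ω : LinearMap.BilinForm ℝ V) (halt : ω.IsAlt) (hnd : ω.Nondegenerate)
    (L₁ L₂ L₃ : Submodule ℝ V)
    (h₁ : IsLagrangian ω L₁) (h₂ : IsLagrangian ω L₂) (h₃ : IsLagrangian ω L₃)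
    (x₁ : V) (hx₁ : x₁ ∈ L₁ ⊓ (L₂ ⊔ L₃))
    (x₁' : V) (hx₁' : x₁' ∈ L₁ ⊓ (L₂ ⊔ L₃))
    (x₂ x₂' : V) (hx₂ : x₂ ∈ L₂) (hx₂' : x₂' ∈ L₂)
    (x₃ x₃' : V) (hx₃ : x₃ ∈ L₃) (hx₃' : x₃' ∈ L₃)
    (hsum : x₁ + x₂ + x₃ = 0) (hsum' : x₁' + x₂' + x₃' = 0) :
    ω x₁ x₂' = ω x₁' x₂ :=
  wall_form_symmetric_general ω halt L₁ L₂ L₃ h₁ h₂ h₃ x₁ hx₁ x₁' hx₁' x₂ x₂' hx₂ hx₂' x₃ x₃' hx₃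
    hx₃' hsum hsum'
end

section
/- Let (V, ω) be a symplectic vector space over ℝ and L₁, L₂, L₃ Lagrangian subspaces. The Wall form Ψ on L₁ ∩ (L₂ + L₃) vanishes on the subspace L₁ ∩ L₂ + L₁ ∩ L₃; that is, if x₁' ∈ L₁ ∩ L₂ + L₁ ∩ L₃ then Ψ(x₁, x₁') = 0 for all x₁ ∈ L₁ ∩ (L₂ + L₃). Hence Ψ descends to a symmetric bilinear form on the quotient (L₁ ∩ (L₂ + L₃)) / (L₁ ∩ L₂ + L₁ ∩ L₃). -/
def IsIsotropic {V : Type*} [AddCommGroup V] [Module ℝ V]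
    (ω : LinearMap.BilinForm ℝ V) (L : Submodule ℝ V) : Prop :=
  L ≤ ω.orthogonal L

namespace IsIsotropic

variable {V : Type*} [AddCommGroup V] [Module ℝ V] {ω : LinearMap.BilinForm ℝ V}
  {L L' : Submodule ℝ V}

theorem apply_eq_zero (hL : IsIsotropic ω L) {x y : V} (hx : x ∈ L) (hy : y ∈ L) :
    ω x y = 0 :=
  hL hy x hx

theorem inf_le_orthogonal_sup (hL : IsIsotropic ω L) (hL' : IsIsotropic ω L') :
    L ⊓ L' ≤ ω.orthogonal (L ⊔ L') := by
  rintro c ⟨hcL, hcL'⟩ x hx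
  obtain ⟨y, hy, y', hy', rfl⟩ := Submodule.mem_sup.mp hx
  rw [map_add, LinearMap.add_apply, hL.apply_eq_zero hy hcL, hL'.apply_eq_zero hy' hcL', add_zero]

end IsIsotropic

theorem IsLagrangian.isIsotropic {V : Type*} [AddCommGroup V] [Module ℝ V]
    {ω : LinearMap.BilinForm ℝ V} {L : Submodule ℝ V} (hL : IsLagrangian ω L) :
    IsIsotropic ω L :=
  hL.ge

theorem wall_form_vanishes_on_sub_general
    {V : Type*} [AddCommGroup V] [Module ℝ V]
    (ω : LinearMap.BilinForm ℝ V)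
    (L₁ L₂ L₃ : Submodule ℝ V)
    (h₁ : IsLagrangian ω L₁) (h₂ : IsLagrangian ω L₂) (h₃ : IsLagrangian ω L₃)
    (x₁ : V) (hx₁ : x₁ ∈ L₁ ⊓ (L₂ ⊔ L₃))
    (x₁' : V) (hx₁' : x₁' ∈ (L₁ ⊓ L₂) ⊔ (L₁ ⊓ L₃))
    (x₂' : V) (hx₂' : x₂' ∈ L₂)
    (x₃' : V) (hx₃' : x₃' ∈ L₃)
    (hsum : x₁' + x₂' + x₃' = 0) :
    ω x₁ x₂' = 0 := by
  obtain ⟨a, ha, b, hb, rfl⟩ := Submodule.mem_sup.mp hx₁'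
  have hc : x₂' + a ∈ L₂ ⊓ L₃ := by
    refine ⟨L₂.add_mem hx₂' ha.2, ?_⟩
    have hc_eq : x₂' + a = -(b + x₃') := by
      rw [eq_neg_iff_add_eq_zero, ← hsum]; abel
    exact hc_eq ▸ L₃.neg_mem (L₃.add_mem hb.2 hx₃')
  have hωc : ω x₁ (x₂' + a) = 0 :=
    h₂.isIsotropic.inf_le_orthogonal_sup h₃.isIsotropic hc x₁ hx₁.2
  have hωa : ω x₁ a = 0 := h₁.isIsotropic.apply_eq_zero hx₁.1 ha.1
  rwa [map_add, hωa, add_zero] at hωc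

/-- **The Wall form vanishes on `L₁ ∩ L₂ + L₁ ∩ L₃`.**
Let `(V, ω)` be a symplectic vector space over `ℝ` and `L₁, L₂, L₃` Lagrangian
subspaces, and let `Ψ(x₁, x₁') = ω(x₁, x₂')` (where `x₁' + x₂' + x₃' = 0`,
`x₂' ∈ L₂`, `x₃' ∈ L₃`) be the Wall form on `L₁ ∩ (L₂ + L₃)`.  If
`x₁' ∈ L₁ ∩ L₂ + L₁ ∩ L₃` then `Ψ(x₁, x₁') = 0` for all `x₁ ∈ L₁ ∩ (L₂ + L₃)`.
Hence `Ψ` descends to a symmetric bilinear form on the quotient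
`(L₁ ∩ (L₂ + L₃)) / (L₁ ∩ L₂ + L₁ ∩ L₃)`. -/
theorem wall_form_vanishes_on_sub
    {V : Type*} [AddCommGroup V] [Module ℝ V] [FiniteDimensional ℝ V]
    (ω : LinearMap.BilinForm ℝ V) (halt : ω.IsAlt) (hnd : ω.Nondegenerate)
    (L₁ L₂ L₃ : Submodule ℝ V)
    (h₁ : IsLagrangian ω L₁) (h₂ : IsLagrangian ω L₂) (h₃ : IsLagrangian ω L₃)
    (x₁ : V) (hx₁ : x₁ ∈ L₁ ⊓ (L₂ ⊔ L₃))
    (x₁' : V) (hx₁' : x₁' ∈ (L₁ ⊓ L₂) ⊔ (L₁ ⊓ L₃))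
    (x₂' : V) (hx₂' : x₂' ∈ L₂)
    (x₃' : V) (hx₃' : x₃' ∈ L₃)
    (hsum : x₁' + x₂' + x₃' = 0) :
    ω x₁ x₂' = 0 :=
  wall_form_vanishes_on_sub_general ω L₁ L₂ L₃ h₁ h₂ h₃ x₁ hx₁ x₁' hx₁' x₂' hx₂' x₃' hx₃' hsum
end

section
/- Let (V, ω) be a symplectic vector space over ℝ and L₁, L₂, L₃ Lagrangian subspaces. The Wall signature is totally antisymmetric under permutations: for any permutation τ of {1,2,3}, σ(V; L_{τ(1)}, L_{τ(2)}, L_{τ(3)}) = sgn(τ) · σ(V; L₁, L₂, L₃). -/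
/-- The Wall pairing `Ψ(x, y) = ω(x, y₂)`, where `y + y₂ + y₃ = 0` with `y₂ ∈ L₂`,
`y₃ ∈ L₃` is some choice of decomposition (the value is independent of the choice
when the `Lᵢ` are Lagrangian and `x ∈ L₂ + L₃`). -/
noncomputable def wallPsi {V : Type*} [AddCommGroup V] [Module ℝ V]
    (ω : LinearMap.BilinForm ℝ V) (L₂ L₃ : Submodule ℝ V) (x y : V) : ℝ := by
  classical
  exact if h : ∃ q : V × V, q.1 ∈ L₂ ∧ q.2 ∈ L₃ ∧ y + q.1 + q.2 = 0 then ω x h.choose.1 else 0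

/-- The maximal dimension of a subspace of `L₁ ⊓ (L₂ ⊔ L₃)` on which the Wall form is
positive definite. -/
noncomputable def wallPosIndex {V : Type*} [AddCommGroup V] [Module ℝ V]
    (ω : LinearMap.BilinForm ℝ V) (L₁ L₂ L₃ : Submodule ℝ V) : ℕ :=
  sSup {n : ℕ | ∃ W : Submodule ℝ V, W ≤ L₁ ⊓ (L₂ ⊔ L₃) ∧ Module.finrank ℝ W = n ∧
    ∀ x ∈ W, x ≠ 0 → 0 < wallPsi ω L₂ L₃ x x}

/-- The maximal dimension of a subspace of `L₁ ⊓ (L₂ ⊔ L₃)` on which the Wall form is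
negative definite. -/
noncomputable def wallNegIndex {V : Type*} [AddCommGroup V] [Module ℝ V]
    (ω : LinearMap.BilinForm ℝ V) (L₁ L₂ L₃ : Submodule ℝ V) : ℕ :=
  sSup {n : ℕ | ∃ W : Submodule ℝ V, W ≤ L₁ ⊓ (L₂ ⊔ L₃) ∧ Module.finrank ℝ W = n ∧
    ∀ x ∈ W, x ≠ 0 → wallPsi ω L₂ L₃ x x < 0}

/-- `σ(V; L₁, L₂, L₃)`: the signature of the Wall form `Ψ` on `L₁ ⊓ (L₂ + L₃)`
(number of positive minus number of negative eigenvalues). -/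
noncomputable def wallSignature {V : Type*} [AddCommGroup V] [Module ℝ V]
    (ω : LinearMap.BilinForm ℝ V) (L₁ L₂ L₃ : Submodule ℝ V) : ℤ :=
  (wallPosIndex ω L₁ L₂ L₃ : ℤ) - (wallNegIndex ω L₁ L₂ L₃ : ℤ)

/-!
For `x = b + c` with `b ∈ L₂`, `c ∈ L₃`, the Wall form gives `Ψ(x, x) = ω(b, c)`. Exchanging
`L₂` and `L₃` therefore negates `Ψ` and interchanges the two indices. For the cyclic rotation,
`x ↦ b` maps a subspace of `L₁ ⊓ (L₂ ⊔ L₃)` on which `Ψ` is definite injectively into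
`L₂ ⊓ (L₃ ⊔ L₁)` (as `b = -c + x` with `x ∈ L₁`), and there `Ψ(b, b) = ω(b, c)` again; three
rotations come back to the start, so the sets of dimensions of definite subspaces coincide.
-/

theorem Submodule.exists_linearMap_prod_of_le_sup {K V : Type*} [DivisionRing K]
    [AddCommGroup V] [Module K V] {B C W : Submodule K V} (hW : W ≤ B ⊔ C) :
    ∃ s : W →ₗ[K] B × C, ∀ w, ((s w).1 : V) + (s w).2 = w := by
  set φ : B × C →ₗ[K] V := B.subtype.coprod C.subtype
  have hφ : LinearMap.range φ = B ⊔ C := by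
    simp only [φ, LinearMap.range_coprod, Submodule.range_subtype]
  obtain ⟨g, hg⟩ := φ.rangeRestrict.exists_rightInverse_of_surjective φ.range_rangeRestrict
  refine ⟨g ∘ₗ Submodule.inclusion (hφ ▸ hW), fun w => ?_⟩
  exact congr_arg Subtype.val (LinearMap.congr_fun hg (Submodule.inclusion (hφ ▸ hW) w))

section

variable {V : Type*} [AddCommGroup V] [Module ℝ V] {ω : LinearMap.BilinForm ℝ V}

theorem IsLagrangian.apply_eq_zero_s19 {L : Submodule ℝ V} (hL : IsLagrangian ω L) {x y : V}
    (hx : x ∈ L) (hy : y ∈ L) : ω x y = 0 :=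
  LinearMap.BilinForm.mem_orthogonal_iff.mp (hL.symm ▸ hy : y ∈ ω.orthogonal L) x hx

theorem IsLagrangian.apply_eq_zero_of_mem_sup_of_mem_inf {B C : Submodule ℝ V}
    (hB : IsLagrangian ω B) (hC : IsLagrangian ω C) {x z : V}
    (hx : x ∈ B ⊔ C) (hz : z ∈ B ⊓ C) : ω x z = 0 := by
  obtain ⟨u, hu, v, hv, rfl⟩ := Submodule.mem_sup.mp hx
  rw [map_add, LinearMap.add_apply, hB.apply_eq_zero_s19 hu hz.1, hC.apply_eq_zero_s19 hv hz.2,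
    add_zero]

theorem wallPsi_eq {B C : Submodule ℝ V} (hB : IsLagrangian ω B) (hC : IsLagrangian ω C)
    {x y b c : V} (hx : x ∈ B ⊔ C) (hb : b ∈ B) (hc : c ∈ C) (h : y + b + c = 0) :
    wallPsi ω B C x y = ω x b := by
  have hex : ∃ q : V × V, q.1 ∈ B ∧ q.2 ∈ C ∧ y + q.1 + q.2 = 0 := ⟨(b, c), hb, hc, h⟩
  rw [wallPsi, dif_pos hex]
  obtain ⟨hb', hc', h'⟩ := hex.choose_spec
  have hdiff : hex.choose.1 - b ∈ B ⊓ C := by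
    refine ⟨B.sub_mem hb' hb, ?_⟩
    rw [show hex.choose.1 - b = c - hex.choose.2 by linear_combination (norm := module) h' - h]
    exact C.sub_mem hc hc'
  have := hB.apply_eq_zero_of_mem_sup_of_mem_inf hC hx hdiff
  rwa [map_sub, sub_eq_zero] at this

theorem wallPsi_add_self (halt : ω.IsAlt) {B C : Submodule ℝ V}
    (hB : IsLagrangian ω B) (hC : IsLagrangian ω C) {b c : V} (hb : b ∈ B) (hc : c ∈ C) :
    wallPsi ω B C (b + c) (b + c) = ω b c := by
  rw [wallPsi_eq hB hC (Submodule.add_mem_sup hb hc) (B.neg_mem hb) (C.neg_mem hc) (by abel),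
    map_neg, LinearMap.map_add₂, halt.self_eq_zero, zero_add, LinearMap.IsAlt.neg halt c b]

theorem wallPsi_swap (halt : ω.IsAlt) {B C : Submodule ℝ V}
    (hB : IsLagrangian ω B) (hC : IsLagrangian ω C) {x : V} (hx : x ∈ B ⊔ C) :
    wallPsi ω C B x x = -wallPsi ω B C x x := by
  obtain ⟨b, hb, c, hc, rfl⟩ := Submodule.mem_sup.mp hx
  rw [wallPsi_add_self halt hB hC hb hc, add_comm, wallPsi_add_self halt hC hB hc hb,
    LinearMap.IsAlt.neg halt b c]

def wallDefiniteDims (ω : LinearMap.BilinForm ℝ V) (P : ℝ → Prop) (L₁ L₂ L₃ : Submodule ℝ V) :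
    Set ℕ :=
  {n | ∃ W : Submodule ℝ V, W ≤ L₁ ⊓ (L₂ ⊔ L₃) ∧ Module.finrank ℝ W = n ∧
    ∀ x ∈ W, x ≠ 0 → P (wallPsi ω L₂ L₃ x x)}

theorem wallPosIndex_eq_sSup (L₁ L₂ L₃ : Submodule ℝ V) :
    wallPosIndex ω L₁ L₂ L₃ = sSup (wallDefiniteDims ω (0 < ·) L₁ L₂ L₃) := rfl

theorem wallNegIndex_eq_sSup (L₁ L₂ L₃ : Submodule ℝ V) :
    wallNegIndex ω L₁ L₂ L₃ = sSup (wallDefiniteDims ω (· < 0) L₁ L₂ L₃) := rfl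

variable (halt : ω.IsAlt) {A B C : Submodule ℝ V}
  (hA : IsLagrangian ω A) (hB : IsLagrangian ω B) (hC : IsLagrangian ω C)
include halt

include hB hC in
theorem wallDefiniteDims_swap (P : ℝ → Prop) :
    wallDefiniteDims ω P A C B = wallDefiniteDims ω (fun r => P (-r)) A B C := by
  ext n
  simp only [wallDefiniteDims, sup_comm C B]
  refine exists_congr fun W => and_congr_right fun hW => and_congr_right fun _ =>
    forall₂_congr fun x hx => ?_
  rw [wallPsi_swap halt hB hC (hW hx).2]

include hA hB hC in
theorem wallDefiniteDims_subset_rotate {P : ℝ → Prop} (hP : ¬P 0) :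
    wallDefiniteDims ω P A B C ⊆ wallDefiniteDims ω P B C A := by
  rintro _ ⟨W, hW, rfl, hPW⟩
  obtain ⟨s, hs⟩ := Submodule.exists_linearMap_prod_of_le_sup (hW.trans inf_le_right)
  set T : W →ₗ[ℝ] V := B.subtype ∘ₗ LinearMap.fst ℝ B C ∘ₗ s
  have hTw (w : W) : T w = -(s w).2 + w := by simp [T, ← hs w]
  have hΨBC (w : W) : wallPsi ω B C w w = ω (s w).1 (s w).2 := by
    rw [← hs w]; exact wallPsi_add_self halt hB hC (s w).1.2 (s w).2.2
  have hΨCA (w : W) : wallPsi ω C A (T w) (T w) = ω (s w).1 (s w).2 := by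
    rw [hTw, wallPsi_add_self halt hC hA (C.neg_mem (s w).2.2) (hW w.2).1, ← hs w,
      LinearMap.map_neg₂, map_add, halt.self_eq_zero, add_zero, LinearMap.IsAlt.neg halt]
  have hT : Function.Injective T := by
    rw [← LinearMap.ker_eq_bot, Submodule.eq_bot_iff]
    intro w hw
    by_contra hw0
    have hb : ((s w).1 : V) = 0 := LinearMap.mem_ker.mp hw
    have := hPW w w.2 (by simpa using hw0)
    rw [hΨBC, hb, map_zero, LinearMap.zero_apply] at this
    exact hP this
  refine ⟨LinearMap.range T, ?_, LinearMap.finrank_range_of_inj hT, ?_⟩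
  · rintro _ ⟨w, rfl⟩
    refine ⟨(s w).1.2, ?_⟩
    rw [hTw]
    exact Submodule.add_mem_sup (C.neg_mem (s w).2.2) (hW w.2).1
  · rintro _ ⟨w, rfl⟩ hw0
    rw [hΨCA, ← hΨBC]
    exact hPW w w.2 fun h => hw0 (by rw [show w = 0 from Subtype.ext h, map_zero])

include hA hB hC in
theorem wallDefiniteDims_rotate {P : ℝ → Prop} (hP : ¬P 0) :
    wallDefiniteDims ω P A B C = wallDefiniteDims ω P B C A :=
  (wallDefiniteDims_subset_rotate halt hA hB hC hP).antisymm <|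
    (wallDefiniteDims_subset_rotate halt hB hC hA hP).trans
      (wallDefiniteDims_subset_rotate halt hC hA hB hP)

include hA hB hC in
theorem wallSignature_rotate : wallSignature ω A B C = wallSignature ω B C A := by
  rw [wallSignature, wallSignature, wallPosIndex_eq_sSup, wallPosIndex_eq_sSup,
    wallNegIndex_eq_sSup, wallNegIndex_eq_sSup,
    wallDefiniteDims_rotate halt hA hB hC (P := (0 < ·)) (lt_irrefl 0),
    wallDefiniteDims_rotate halt hA hB hC (P := (· < 0)) (lt_irrefl 0)]

include hB hC in
theorem wallSignature_swap₂₃ : wallSignature ω A C B = -wallSignature ω A B C := by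
  have hpos : wallPosIndex ω A C B = wallNegIndex ω A B C := by
    rw [wallPosIndex_eq_sSup, wallDefiniteDims_swap halt hB hC]
    simp only [neg_pos, wallNegIndex_eq_sSup]
  have hneg : wallNegIndex ω A C B = wallPosIndex ω A B C := by
    rw [wallNegIndex_eq_sSup, wallDefiniteDims_swap halt hB hC]
    simp only [neg_lt_zero, wallPosIndex_eq_sSup]
  rw [wallSignature, wallSignature, hpos, hneg, neg_sub]

include hA hB hC in
theorem wallSignature_swap₁₂ : wallSignature ω B A C = -wallSignature ω A B C := by
  rw [wallSignature_rotate halt hB hA hC, wallSignature_swap₂₃ halt hB hC]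

include hA hB hC in
theorem wallSignature_swap₁₃ : wallSignature ω C B A = -wallSignature ω A B C := by
  rw [wallSignature_rotate halt hC hB hA, wallSignature_swap₁₂ halt hA hB hC]

theorem wallSignature_comp_swap {L : Fin 3 → Submodule ℝ V} (hL : ∀ i, IsLagrangian ω (L i))
    {x y : Fin 3} (hxy : x ≠ y) :
    wallSignature ω (L (Equiv.swap x y 0)) (L (Equiv.swap x y 1)) (L (Equiv.swap x y 2)) =
      -wallSignature ω (L 0) (L 1) (L 2) := by
  have h₁₂ := wallSignature_swap₁₂ halt (hL 0) (hL 1) (hL 2)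
  have h₁₃ := wallSignature_swap₁₃ halt (hL 0) (hL 1) (hL 2)
  have h₂₃ := wallSignature_swap₂₃ halt (hL 1) (hL 2) (A := L 0)
  fin_cases x <;> fin_cases y <;>
    first | exact absurd rfl hxy | simpa [Equiv.swap_apply_of_ne_of_ne]

end

theorem wall_signature_antisymmetric_general
    {V : Type*} [AddCommGroup V] [Module ℝ V]
    (ω : LinearMap.BilinForm ℝ V) (halt : ω.IsAlt)
    (L : Fin 3 → Submodule ℝ V) (hL : ∀ i, IsLagrangian ω (L i))
    (τ : Equiv.Perm (Fin 3)) :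
    wallSignature ω (L (τ 0)) (L (τ 1)) (L (τ 2)) =
      ((Equiv.Perm.sign τ : ℤˣ) : ℤ) * wallSignature ω (L 0) (L 1) (L 2) := by
  induction τ using Equiv.Perm.swap_induction_on' with
  | one => simp
  | mul_swap τ x y hxy ih =>
    rw [Equiv.Perm.sign_mul, Equiv.Perm.sign_swap hxy, Units.val_mul, Units.val_neg,
      Units.val_one, mul_neg_one, neg_mul, ← ih]
    exact wallSignature_comp_swap halt (fun i => hL (τ i)) hxy

/-- **Total antisymmetry of the Wall signature.**
For Lagrangian subspaces `L 0, L 1, L 2` of a symplectic vector space `(V, ω)` and any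
permutation `τ` of `{0, 1, 2}`,
`σ(V; L_{τ(0)}, L_{τ(1)}, L_{τ(2)}) = sgn(τ) · σ(V; L₀, L₁, L₂)`. -/
theorem wall_signature_antisymmetric
    {V : Type*} [AddCommGroup V] [Module ℝ V] [FiniteDimensional ℝ V]
    (ω : LinearMap.BilinForm ℝ V) (halt : ω.IsAlt) (hnd : ω.Nondegenerate)
    (L : Fin 3 → Submodule ℝ V) (hL : ∀ i, IsLagrangian ω (L i))
    (τ : Equiv.Perm (Fin 3)) :
    wallSignature ω (L (τ 0)) (L (τ 1)) (L (τ 2)) =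
      ((Equiv.Perm.sign τ : ℤˣ) : ℤ) * wallSignature ω (L 0) (L 1) (L 2) :=
  wall_signature_antisymmetric_general ω halt L hL τ
end
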